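/- arXiv:1310.2208 — 2 statements merged into one kernel-verified Lean document; each statement's English description precedes it below -/
import Mathlib

section
/- Let E0 and E1 be filters with support intervals [−r0, r0] (centered at 0) and [−r1−1, r1−1] (centered at −1) respectively, and let S(z) be a filter with support interval [−t+1, t], t ≥ 1. If r0 ≤ r1 + 2t − 2, then E0'(z) = E0(z) + S(z^2)·E1(z) has support interval [−r1−2t+1, r1+2t−1], i.e., centered at 0 with support radius r1 + 2t − 1. -/
noncomputable section

/-- FIR filters: Laurent polynomials over ℝ, `F(z) = Σ f(n) z^{-n}`,
represented by their coefficient function `n ↦ f n`; multiplication is convolution. -/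
abbrev Filt := AddMonoidAlgebra ℝ ℤ

/-- `SuppInt f a b` : the support interval of `f` is `[a,b]` (so `f` is a
nonzero FIR filter with `f a, f b ≠ 0` and all support in `[a,b]`). -/
def SuppInt (f : Filt) (a b : ℤ) : Prop :=
  f.coeff a ≠ 0 ∧ f.coeff b ≠ 0 ∧ ∀ n, f.coeff n ≠ 0 → a ≤ n ∧ n ≤ b

/-- Upsampling: `F(z) ↦ F(z²)`, i.e. `Σ f(n) z^{-2n}`. -/
def up (f : Filt) : Filt := AddMonoidAlgebra.ofCoeff (Finsupp.mapDomain (fun n : ℤ => 2 * n) f.coeff)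

/-! Endpoint coefficients of a product are products of endpoint coefficients, so `S(z²) E₁(z)`
has support interval `[2(1 - t) - r₁ - 1, 2t + r₁ - 1]`; since `r₀ ≤ r₁ + 2t - 2`, the support of
`E₀` lies strictly inside it and adding `E₀` changes neither endpoint. -/

open AddMonoidAlgebra

lemma coeff_up_two_mul (f : Filt) (n : ℤ) : (up f).coeff (2 * n) = f.coeff n :=
  Finsupp.mapDomain_apply (mul_right_injective₀ two_ne_zero) f.coeff n

lemma exists_two_mul_of_coeff_up_ne_zero {f : Filt} {n : ℤ} (hn : (up f).coeff n ≠ 0) :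
    ∃ m, 2 * m = n ∧ f.coeff m ≠ 0 := by
  obtain ⟨m, rfl⟩ : n ∈ Set.range (2 * · : ℤ → ℤ) :=
    by_contra fun hm => hn (Finsupp.mapDomain_of_notMem_range _ _ hm)
  exact ⟨m, rfl, by rwa [coeff_up_two_mul] at hn⟩

namespace SuppInt

variable {f g : Filt} {a b c d : ℤ}

lemma bounds_of_mem_support (h : SuppInt f a b) {n : ℤ} (hn : n ∈ f.coeff.support) :
    a ≤ n ∧ n ≤ b :=
  h.2.2 n (Finsupp.mem_support_iff.mp hn)

theorem mul (hf : SuppInt f a b) (hg : SuppInt g c d) : SuppInt (f * g) (a + c) (b + d) := by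
  refine ⟨?_, ?_, fun n hn => ?_⟩
  · have hunique : UniqueAdd f.coeff.support g.coeff.support a c := fun x y hx hy _ => by
      have := hf.bounds_of_mem_support hx
      have := hg.bounds_of_mem_support hy
      omega
    rw [coeff_mul_add_of_uniqueAdd hunique]
    exact mul_ne_zero hf.1 hg.1
  · have hunique : UniqueAdd f.coeff.support g.coeff.support b d := fun x y hx hy _ => by
      have := hf.bounds_of_mem_support hx
      have := hg.bounds_of_mem_support hy
      omega
    rw [coeff_mul_add_of_uniqueAdd hunique]
    exact mul_ne_zero hf.2.1 hg.2.1
  · classical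
    obtain ⟨x, hx, y, hy, rfl⟩ :=
      Finset.mem_add.mp (support_coeff_mul_subset f g (Finsupp.mem_support_iff.mpr hn))
    have := hf.bounds_of_mem_support hx
    have := hg.bounds_of_mem_support hy
    omega

theorem up (hf : SuppInt f a b) : SuppInt (_root_.up f) (2 * a) (2 * b) := by
  refine ⟨?_, ?_, fun n hn => ?_⟩
  · rw [coeff_up_two_mul]; exact hf.1
  · rw [coeff_up_two_mul]; exact hf.2.1
  · obtain ⟨m, rfl, hm⟩ := exists_two_mul_of_coeff_up_ne_zero hn
    have := hf.2.2 m hm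
    omega

theorem add_of_support_subset_Ioo (hg : SuppInt g c d)
    (hf : ∀ n, f.coeff n ≠ 0 → c < n ∧ n < d) : SuppInt (f + g) c d := by
  have hf_c : f.coeff c = 0 := by_contra fun h => by have := hf c h; omega
  have hf_d : f.coeff d = 0 := by_contra fun h => by have := hf d h; omega
  refine ⟨?_, ?_, fun n hn => ?_⟩
  · simpa [coeff_add, hf_c] using hg.1
  · simpa [coeff_add, hf_d] using hg.2.1
  · by_cases hfn : f.coeff n = 0
    · exact hg.2.2 n (by simpa [coeff_add, hfn] using hn)
    · have := hf n hfn
      omega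

end SuppInt

theorem ws_lowpass_lift_suppInt_general (E0 E1 S : Filt) (r0 r1 t : ℤ)
    (h0 : SuppInt E0 (-r0) r0) (h1 : SuppInt E1 (-r1 - 1) (r1 - 1))
    (hS : SuppInt S (-t + 1) t) (hle : r0 ≤ r1 + 2 * t - 2) :
    SuppInt (E0 + up S * E1) (-r1 - 2 * t + 1) (r1 + 2 * t - 1) := by
  have hSE1 : SuppInt (up S * E1) (-r1 - 2 * t + 1) (r1 + 2 * t - 1) := by
    convert hS.up.mul h1 using 1 <;> ring
  refine hSE1.add_of_support_subset_Ioo fun n hn => ?_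
  have := h0.2.2 n hn
  omega

/-- the lowpass WS lifting update `E₀'(z) = E₀(z) + S(z²) E₁(z)`. -/
theorem ws_lowpass_lift_suppInt (E0 E1 S : Filt) (r0 r1 t : ℤ) (ht : 1 ≤ t)
    (h0 : SuppInt E0 (-r0) r0) (h1 : SuppInt E1 (-r1 - 1) (r1 - 1))
    (hS : SuppInt S (-t + 1) t) (hle : r0 ≤ r1 + 2 * t - 2) :
    SuppInt (E0 + up S * E1) (-r1 - 2 * t + 1) (r1 + 2 * t - 1) :=
  ws_lowpass_lift_suppInt_general E0 E1 S r0 r1 t h0 h1 hS hle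
end
end

section
/- Suppose a lifting cascade satisfies: (1) the two base polyphase filter vectors have equal polyphase support intervals, and (2) at every step n ≥ 0 the polyphase support interval of the non-lifted filter vector is strictly contained in that of the lifted filter vector, and the cascade is irreducible (the update characteristic alternates). Then the polyphase orders of the intermediate polyphase matrices E^(n) are strictly increasing in n: order(E^(n)) > order(E^(n−1)) for all n ≥ 0, where E^(−1) = B. -/
/-!
Write `j` for the filter vector kept at step `n` and `i = m n` for the lifted one.  The interval
of `i` at level `n` lies inside that of `j`: at the base the two intervals coincide, and later
`i` is the vector kept at step `n - 1`, which by covering lies inside the vector lifted there,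
namely `j`.  Hence the order at level `n` is the length of `j`'s interval.  This interval is
unchanged by step `n` and strictly contained in the new interval of `i`, whose length is the
order at level `n + 1`.
-/

/-- `a i`, `b i` are the endpoints of the support interval of the `i`-th polyphase filter
vector. -/
def polyphaseOrder (a b : Bool → ℤ) : ℤ :=
  max (b false) (b true) - min (a false) (a true)

lemma polyphaseOrder_eq_of_le {a b : Bool → ℤ} {i j : Bool} (hij : i ≠ j) (ha : a j ≤ a i)
    (hb : b i ≤ b j) : polyphaseOrder a b = b j - a j := by
  unfold polyphaseOrder
  cases i <;> cases j <;> simp only [ne_eq, not_true_eq_false] at hij <;> omega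

lemma sub_lt_sub_of_Icc_ssubset_Icc {a b a' b' : ℤ} (h : a' ≤ b')
    (hs : Finset.Icc a' b' ⊂ Finset.Icc a b) : b' - a' < b - a := by
  have := Finset.card_lt_card hs
  rw [Int.card_Icc, Int.card_Icc] at this
  omega

section Cascade

variable {m : ℕ → Bool} {a b : ℕ → Bool → ℤ}

lemma lifted_Icc_subset_kept (hne : ∀ k i, a k i ≤ b k i)
    (hbase_a : a 0 false = a 0 true) (hbase_b : b 0 false = b 0 true)
    (halt : ∀ n, m (n + 1) = !(m n))
    (hcov : ∀ n, Finset.Icc (a (n + 1) (!(m n))) (b (n + 1) (!(m n))) ⊂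
      Finset.Icc (a (n + 1) (m n)) (b (n + 1) (m n))) :
    ∀ n, a n (!(m n)) ≤ a n (m n) ∧ b n (m n) ≤ b n (!(m n))
  | 0 => by cases m 0 <;> simp [hbase_a, hbase_b]
  | k + 1 => by
    rw [halt k, Bool.not_not, ← Finset.Icc_subset_Icc_iff (hne _ _)]
    exact (hcov k).subset

end Cascade

/-- Level `k` of `a`, `b` describes `E⁽ᵏ⁻¹⁾`, so `k = 0` is the base `B`. -/
theorem order_increasing_of_covering (m : ℕ → Bool) (a b : ℕ → Bool → ℤ)
    (hne : ∀ k i, a k i ≤ b k i)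
    (hbase_a : a 0 false = a 0 true) (hbase_b : b 0 false = b 0 true)
    (halt : ∀ n, m (n + 1) = !(m n))
    (hkeep_a : ∀ n, a (n + 1) (!(m n)) = a n (!(m n)))
    (hkeep_b : ∀ n, b (n + 1) (!(m n)) = b n (!(m n)))
    (hcov : ∀ n, Finset.Icc (a (n + 1) (!(m n))) (b (n + 1) (!(m n))) ⊂
      Finset.Icc (a (n + 1) (m n)) (b (n + 1) (m n))) :
    ∀ n : ℕ,
      max (b n false) (b n true) - min (a n false) (a n true) <
      max (b (n + 1) false) (b (n + 1) true) - min (a (n + 1) false) (a (n + 1) true) := by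
  intro n
  obtain ⟨ha, hb⟩ := lifted_Icc_subset_kept hne hbase_a hbase_b halt hcov n
  obtain ⟨ha', hb'⟩ := (Finset.Icc_subset_Icc_iff (hne _ _)).mp (hcov n).subset
  calc polyphaseOrder (a n) (b n)
      = b n (!(m n)) - a n (!(m n)) := polyphaseOrder_eq_of_le (by simp) ha hb
    _ = b (n + 1) (!(m n)) - a (n + 1) (!(m n)) := by rw [hkeep_a, hkeep_b]
    _ < b (n + 1) (m n) - a (n + 1) (m n) := sub_lt_sub_of_Icc_ssubset_Icc (hne _ _) (hcov n)
    _ = polyphaseOrder (a (n + 1)) (b (n + 1)) :=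
      (polyphaseOrder_eq_of_le (by simp) ha' hb').symm
end
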